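/- In the NIC structure M constructed from a tree plan Γ with components modeling ℵ₀-categorical, algebraically trivial theories T_σ with |S₁(T_σ)| = 1, algebraic closure equals tree-closure: for every finite C ⊆ Γ(S), acl^M(C) = tcl(C). -/

import Mathlib

/-!
Every automorphism of `M` fixes `[]` and the prefixes of the nodes it fixes, and a
component `M(a)` with `λ(π a) = 1` is a singleton, so once it fixes the predecessor of `a`
it fixes `a`; hence `tcl(C)` is fixed pointwise by `Aut(M/C)`.
Conversely, if `x ∉ tcl(C)`, its first prefix `p ++ [(k, s)]` outside `tcl(C)` lies in an
infinite component, and `s` is not among the finitely many labels of that component lying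
below `C`. By algebraic triviality of `T_σ`, infinitely many images of `s` are reached by
automorphisms of `N_σ` fixing those labels, and relabelling the component accordingly
gives automorphisms of `M` over `C` moving `x` to infinitely many distinct nodes.
-/

namespace TreePlanDef

/-- Nodes of `Γ(X)` live among finite sequences of pairs `(i, t)` with `i : ℕ` and
`t : Option S` (`none` plays the role of `⋆`, `some x` an element of `X ⊆ S`). -/
abbrev PreNode (S : Type*) := List (ℕ × Option S)

/-- The projection `π` onto the first coordinates. -/
def proj {S : Type*} (a : PreNode S) : List ℕ := a.map Prod.fst

/-- Membership in `Γ(X)`: the projection is a node of `Γ`, and for each `k`, the second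
coordinate of the `k`-th entry is `⋆ = none` if `λ` of the corresponding initial segment
is `1` (`lam = false`) and an element of `X` if it is `∞` (`lam = true`). -/
def memGamma {S : Type*} (Γ : Finset (List ℕ)) (lam : List ℕ → Bool) (X : Set S)
    (a : PreNode S) : Prop :=
  proj a ∈ Γ ∧
    ∀ (k : ℕ) (h : k < a.length),
      (lam (proj (a.take (k + 1))) = false → (a.get ⟨k, h⟩).2 = none) ∧
      (lam (proj (a.take (k + 1))) = true → ∃ x ∈ X, (a.get ⟨k, h⟩).2 = some x)

open Classical in
/-- The meet (longest common prefix) of two nodes. -/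
noncomputable def meet {S : Type*} : PreNode S → PreNode S → PreNode S
  | [], _ => []
  | _, [] => []
  | (x :: xs), (y :: ys) => if x = y then x :: meet xs ys else []

end TreePlanDef


namespace TreePlanDef

variable {S : Type*}

/-- The stages of the tree-closure operator on subsets of `Γ(X)`. -/
def tclN (Γ : Finset (List ℕ)) (lam : List ℕ → Bool) (X : Set S) :
    ℕ → Set (PreNode S) → Set (PreNode S)
  | 0, B => {([] : PreNode S)} ∪ {a : PreNode S | ∃ b ∈ B, a <+: b}
  | n + 1, B => tclN Γ lam X n B ∪
      {a : PreNode S | memGamma Γ lam X a ∧ lam (proj a) = false ∧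
        a.dropLast ∈ tclN Γ lam X n B}

/-- The tree-closure `tcl(B) = ⋃ₙ tclₙ(B)`. -/
def tclSet (Γ : Finset (List ℕ)) (lam : List ℕ → Bool) (X : Set S)
    (B : Set (PreNode S)) : Set (PreNode S) :=
  ⋃ n, tclN Γ lam X n B

/-- The universe of the tree `Γ(S)` (every label from `S` allowed: `X = univ`). -/
def NodeSet (Γ : Finset (List ℕ)) (lam : List ℕ → Bool) (S : Type*) :
    Set (PreNode S) :=
  {a : PreNode S | memGamma Γ lam (Set.univ : Set S) a}

/-- A permutation of finite sequences is a tree automorphism of `Γ(S)` if it preserves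
the universe `Γ(S)` (in both directions), the projection `π`, and the predecessor
function; this characterizes automorphisms of the tree structure `Γ(S)`. -/
def IsTreeAuto (Γ : Finset (List ℕ)) (lam : List ℕ → Bool)
    (g : Equiv.Perm (PreNode S)) : Prop :=
  (∀ a ∈ NodeSet Γ lam S, g a ∈ NodeSet Γ lam S) ∧
  (∀ a ∈ NodeSet Γ lam S, g⁻¹ a ∈ NodeSet Γ lam S) ∧
  (∀ a ∈ NodeSet Γ lam S, proj (g a) = proj a) ∧
  (∀ a ∈ NodeSet Γ lam S, g a.dropLast = (g a).dropLast)

/-- The component `M(e) = {x : pred x = pred e ∧ π x = π e}`. -/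
def Mc (Γ : Finset (List ℕ)) (lam : List ℕ → Bool) (e : PreNode S) :
    Set (PreNode S) :=
  {x ∈ NodeSet Γ lam S | x.dropLast = e.dropLast ∧ proj x = proj e}

end TreePlanDef

open TreePlanDef List

namespace TreePlanDef

variable {S : Type*}

/-- Compatibility of a permutation of `Γ(S)` with the component structures: on each
infinite component (children of `b` along an infinity node `(proj b) ++ [k]`), the map
induced on the labels in `S` agrees on every finite set with some automorphism
`hh ∈ H ((proj b) ++ [k])` of the component model `N_σ` (whose universe is identified
with `S` via the fixed bijection `f_σ`).  Together with being a tree automorphism this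
characterizes membership in `Aut(M)` for the constructed structure `M`. -/
def Compat (Γ : Finset (List ℕ)) (lam : List ℕ → Bool)
    (H : List ℕ → Set (Equiv.Perm S)) (g : Equiv.Perm (PreNode S)) : Prop :=
  ∀ b ∈ NodeSet Γ lam S, ∀ k : ℕ, proj b ++ [k] ∈ Γ → lam (proj b ++ [k]) = true →
    ∀ F : Finset S, ∃ hh ∈ H (proj b ++ [k]), ∀ t ∈ F,
      g (b ++ [(k, some t)]) = g b ++ [(k, some (hh t))]

/-- The automorphism group of the constructed structure `M`. -/
def AutM (Γ : Finset (List ℕ)) (lam : List ℕ → Bool)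
    (H : List ℕ → Set (Equiv.Perm S)) : Set (Equiv.Perm (PreNode S)) :=
  {g : Equiv.Perm (PreNode S) |
    IsTreeAuto Γ lam g ∧ Compat Γ lam H g ∧ Compat Γ lam H g⁻¹}

end TreePlanDef

namespace List

variable {α : Type*}

theorem mem_of_prefix_of_forall_dropLast_mem {T : Set (List α)}
    (hT : ∀ l ∈ T, l.dropLast ∈ T) {a b : List α} (hb : b ∈ T) (hab : a <+: b) : a ∈ T := by
  obtain ⟨d, rfl⟩ := hab
  induction d using List.reverseRecOn with
  | nil => simpa using hb
  | append_singleton d e ih => exact ih (by simpa [← List.append_assoc] using hT _ hb)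

theorem exists_append_cons_of_nil_mem_of_not_mem {T : Set (List α)} (h0 : [] ∈ T)
    {x : List α} (hx : x ∉ T) : ∃ p e r, x = p ++ e :: r ∧ p ∈ T ∧ p ++ [e] ∉ T := by
  induction x using List.reverseRecOn with
  | nil => exact absurd h0 hx
  | append_singleton y e ih =>
    by_cases hy : y ∈ T
    · exact ⟨y, e, [], by simp, hy, hx⟩
    · obtain ⟨p, e', r, rfl, hp, hpe⟩ := ih hy
      exact ⟨p, e', r ++ [e], by simp, hp, hpe⟩

theorem finite_setOf_exists_prefix {C : Set (List α)} (hC : C.Finite) :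
    {a | ∃ c ∈ C, a <+: c}.Finite := by
  refine (hC.biUnion fun c _ => c.inits.finite_toSet).subset ?_
  rintro a ⟨c, hc, hac⟩
  exact Set.mem_biUnion hc (List.mem_inits _ _ |>.2 hac)

end List

namespace TreePlanDef

variable {S : Type*} {Γ : Finset (List ℕ)} {lam : List ℕ → Bool}

@[simp] lemma proj_nil : proj ([] : PreNode S) = [] := rfl

@[simp] lemma proj_append (a b : PreNode S) : proj (a ++ b) = proj a ++ proj b := map_append

@[simp] lemma proj_singleton (e : ℕ × Option S) : proj [e] = [e.1] := rfl

lemma proj_take (a : PreNode S) (n : ℕ) : proj (a.take n) = (proj a).take n := map_take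

lemma proj_dropLast (a : PreNode S) : proj a.dropLast = (proj a).dropLast := map_dropLast

@[simp] lemma length_proj (a : PreNode S) : (proj a).length = a.length := length_map _

@[simp] lemma proj_eq_nil {a : PreNode S} : proj a = [] ↔ a = [] := map_eq_nil_iff

lemma memGamma_univ_iff {a : PreNode S} :
    memGamma Γ lam Set.univ a ↔
      proj a ∈ Γ ∧ ∀ k (h : k < a.length), a[k].2.isSome = lam (proj (a.take (k + 1))) := by
  refine and_congr_right fun _ => forall_congr' fun k => forall_congr' fun h => ?_
  simp only [get_eq_getElem, Set.mem_univ, true_and]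
  cases lam (proj (a.take (k + 1))) <;> cases a[k].2 <;> simp

lemma memGamma_univ_of_proj_eq {a b : PreNode S} (hproj : proj a = proj b)
    (hsome : a.map (·.2.isSome) = b.map (·.2.isSome)) (ha : memGamma Γ lam Set.univ a) :
    memGamma Γ lam Set.univ b := by
  have hlen : a.length = b.length := by simpa using congrArg length hproj
  rw [memGamma_univ_iff] at ha ⊢
  refine ⟨hproj ▸ ha.1, fun k hk => ?_⟩
  have hk' : k < a.length := hlen ▸ hk
  have hkey : a[k].2.isSome = b[k].2.isSome := by
    have := getElem_of_eq hsome (by simpa using hk')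
    rwa [getElem_map, getElem_map] at this
  rw [← hkey, proj_take, ← hproj, ← proj_take]
  exact ha.2 k hk'

lemma memGamma_concat_isSome {a : PreNode S} {e : ℕ × Option S}
    (h : memGamma Γ lam Set.univ (a ++ [e])) : e.2.isSome = lam (proj a ++ [e.1]) := by
  have hlast := (memGamma_univ_iff.1 h).2 a.length (by simp)
  rwa [take_of_length_le (by simp), getElem_concat_length rfl, proj_append] at hlast

lemma nil_mem_NodeSet (hroot : ([] : List ℕ) ∈ Γ) : ([] : PreNode S) ∈ NodeSet Γ lam S :=
  memGamma_univ_iff.2 ⟨hroot, by simp⟩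

lemma dropLast_mem_NodeSet (hclosed : ∀ l ∈ Γ, l.dropLast ∈ Γ) {a : PreNode S}
    (ha : a ∈ NodeSet Γ lam S) : a.dropLast ∈ NodeSet Γ lam S := by
  obtain ⟨hΓ, hlab⟩ := memGamma_univ_iff.1 ha
  refine memGamma_univ_iff.2 ⟨proj_dropLast a ▸ hclosed _ hΓ, fun k hk => ?_⟩
  have hk' : k < a.length := hk.trans_le (by simp)
  have htake : a.dropLast.take (k + 1) = a.take (k + 1) := by
    rw [dropLast_eq_take, take_take, min_eq_left (by simpa using hk)]
  rw [getElem_dropLast, htake]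
  exact hlab k hk'

lemma prefix_mem_NodeSet (hclosed : ∀ l ∈ Γ, l.dropLast ∈ Γ) {a b : PreNode S}
    (hb : b ∈ NodeSet Γ lam S) (hab : a <+: b) : a ∈ NodeSet Γ lam S :=
  mem_of_prefix_of_forall_dropLast_mem (fun _ => dropLast_mem_NodeSet hclosed) hb hab

lemma eq_of_mem_NodeSet_of_lam_eq_false {a b : PreNode S} (ha : a ∈ NodeSet Γ lam S)
    (hb : b ∈ NodeSet Γ lam S) (hlam : lam (proj a) = false) (hproj : proj a = proj b)
    (hpred : a.dropLast = b.dropLast) : a = b := by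
  rcases a.eq_nil_or_concat' with rfl | ⟨a', e, rfl⟩
  · exact (proj_eq_nil.1 hproj.symm).symm
  rcases b.eq_nil_or_concat' with rfl | ⟨b', e', rfl⟩
  · simp at hproj
  obtain rfl : a' = b' := by simpa using hpred
  obtain ⟨k, o⟩ := e
  obtain ⟨k', o'⟩ := e'
  obtain rfl : k = k' := by simpa using hproj
  simp only [proj_append, proj_singleton] at hlam
  have ho : o = none := by simpa [hlam] using memGamma_concat_isSome ha
  have ho' : o' = none := by simpa [hlam] using memGamma_concat_isSome hb
  rw [ho, ho']

namespace IsTreeAuto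

variable {g : Equiv.Perm (PreNode S)} (hg : IsTreeAuto Γ lam g)
include hg

lemma apply_nil (hroot : ([] : List ℕ) ∈ Γ) : g [] = [] := by
  simpa using hg.2.2.1 [] (nil_mem_NodeSet hroot)

lemma apply_eq_self_of_prefix (hclosed : ∀ l ∈ Γ, l.dropLast ∈ Γ) {a b : PreNode S}
    (hb : b ∈ NodeSet Γ lam S) (hgb : g b = b) (hab : a <+: b) : g a = a := by
  refine (mem_of_prefix_of_forall_dropLast_mem (T := {a | a ∈ NodeSet Γ lam S ∧ g a = a})
    ?_ ⟨hb, hgb⟩ hab).2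
  rintro l ⟨hl, hgl⟩
  exact ⟨dropLast_mem_NodeSet hclosed hl, by rw [hg.2.2.2 l hl, hgl]⟩

lemma apply_eq_self_of_lam_eq_false {a : PreNode S} (ha : a ∈ NodeSet Γ lam S)
    (hlam : lam (proj a) = false) (hpred : g a.dropLast = a.dropLast) : g a = a :=
  (eq_of_mem_NodeSet_of_lam_eq_false ha (hg.1 a ha) hlam (hg.2.2.1 a ha).symm
    (by rw [← hg.2.2.2 a ha, hpred])).symm

end IsTreeAuto

lemma nil_mem_tclSet (C : Set (PreNode S)) : [] ∈ tclSet Γ lam Set.univ C :=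
  Set.mem_iUnion.2 ⟨0, Or.inl rfl⟩

lemma mem_tclSet_of_prefix {C : Set (PreNode S)} {a c : PreNode S} (hc : c ∈ C)
    (hac : a <+: c) : a ∈ tclSet Γ lam Set.univ C :=
  Set.mem_iUnion.2 ⟨0, Or.inr ⟨c, hc, hac⟩⟩

lemma mem_tclSet_of_lam_eq_false {C : Set (PreNode S)} {a : PreNode S}
    (ha : a ∈ NodeSet Γ lam S) (hlam : lam (proj a) = false)
    (hpred : a.dropLast ∈ tclSet Γ lam Set.univ C) : a ∈ tclSet Γ lam Set.univ C := by
  obtain ⟨n, hn⟩ := Set.mem_iUnion.1 hpred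
  exact Set.mem_iUnion.2 ⟨n + 1, Or.inr ⟨ha, hlam, hn⟩⟩

lemma tclSet_induction {C : Set (PreNode S)} {P : PreNode S → Prop} (hnil : P [])
    (hprefix : ∀ c ∈ C, ∀ a, a <+: c → P a)
    (hstep : ∀ a ∈ NodeSet Γ lam S, lam (proj a) = false → P a.dropLast → P a)
    {a : PreNode S} (ha : a ∈ tclSet Γ lam Set.univ C) : P a := by
  obtain ⟨n, hn⟩ := Set.mem_iUnion.1 ha
  clear ha
  induction n generalizing a with
  | zero => rcases hn with rfl | ⟨c, hc, hac⟩; exacts [hnil, hprefix c hc a hac]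
  | succ n ih => rcases hn with hn | ⟨ha, hlam, hpred⟩; exacts [ih hn, hstep a ha hlam (ih hpred)]

lemma tclSet_subset_NodeSet (hroot : ([] : List ℕ) ∈ Γ) (hclosed : ∀ l ∈ Γ, l.dropLast ∈ Γ)
    {C : Set (PreNode S)} (hC : C ⊆ NodeSet Γ lam S) : tclSet Γ lam Set.univ C ⊆ NodeSet Γ lam S :=
  fun _ => tclSet_induction (nil_mem_NodeSet hroot)
    (fun _ hc _ hac => prefix_mem_NodeSet hclosed (hC hc) hac) fun _ ha _ _ => ha

lemma IsTreeAuto.apply_eq_self_of_mem_tclSet (hroot : ([] : List ℕ) ∈ Γ)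
    (hclosed : ∀ l ∈ Γ, l.dropLast ∈ Γ) {C : Set (PreNode S)} (hC : C ⊆ NodeSet Γ lam S)
    {g : Equiv.Perm (PreNode S)} (hg : IsTreeAuto Γ lam g) (hgC : ∀ c ∈ C, g c = c)
    {a : PreNode S} (ha : a ∈ tclSet Γ lam Set.univ C) : g a = a :=
  tclSet_induction (P := fun a => g a = a) (hg.apply_nil hroot)
    (fun c hc _ hac => hg.apply_eq_self_of_prefix hclosed (hC hc) (hgC c hc) hac)
    (fun _ ha hlam hpred => hg.apply_eq_self_of_lam_eq_false ha hlam hpred) ha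

section Relabel

variable (p : PreNode S) (k : ℕ)

open Classical in
/-- Moves every node above the child `p ++ [(k, some u)]` to the corresponding node above
`p ++ [(k, some (f u))]`: the automorphism of `M` induced by `f` on one infinite component. -/
noncomputable def relabel (f : S → S) (w : PreNode S) : PreNode S :=
  if h : ∃ u r, w = p ++ (k, some u) :: r then
    p ++ (k, some (f h.choose)) :: h.choose_spec.choose
  else w

lemma append_cons_some_injective (r : PreNode S) :
    Function.Injective fun u : S => p ++ (k, some u) :: r := by
  intro u u' h
  simp_all

variable {p k} {f : S → S}

@[simp] lemma relabel_append_cons (u : S) (r : PreNode S) :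
    relabel p k f (p ++ (k, some u) :: r) = p ++ (k, some (f u)) :: r := by
  have h : ∃ u' r', p ++ (k, some u) :: r = p ++ (k, some u') :: r' := ⟨u, r, rfl⟩
  rw [relabel, dif_pos h]
  obtain ⟨hu, hr⟩ : u = h.choose ∧ r = h.choose_spec.choose := by
    simpa only [append_cancel_left_eq, cons.injEq, Prod.mk.injEq, Option.some.injEq, true_and]
      using h.choose_spec.choose_spec
  rw [← hr, ← hu]

lemma relabel_of_not_exists {w : PreNode S} (h : ¬ ∃ u r, w = p ++ (k, some u) :: r) :
    relabel p k f w = w :=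
  dif_neg h

lemma relabel_eq_self {w : PreNode S} (h : ∀ u r, w = p ++ (k, some u) :: r → f u = u) :
    relabel p k f w = w := by
  by_cases hw : ∃ u r, w = p ++ (k, some u) :: r
  · obtain ⟨u, r, rfl⟩ := hw
    rw [relabel_append_cons, h u r rfl]
  · exact relabel_of_not_exists hw

@[simp] lemma relabel_self : relabel p k f p = p :=
  relabel_eq_self fun u r h => by simpa using congrArg length h

lemma relabel_concat {b : PreNode S} {e : ℕ × Option S} (h : ¬ (b = p ∧ e.1 = k)) :
    relabel p k f (b ++ [e]) = relabel p k f b ++ [e] := by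
  by_cases hb : ∃ u r, b = p ++ (k, some u) :: r
  · obtain ⟨u, r, rfl⟩ := hb
    simp
  rw [relabel_of_not_exists hb, relabel_of_not_exists]
  rintro ⟨u, r, hbe⟩
  rcases r.eq_nil_or_concat' with rfl | ⟨r, e', rfl⟩
  · obtain ⟨rfl, he⟩ := append_inj' hbe rfl
    exact h ⟨rfl, by simp_all⟩
  · rw [← cons_append, ← append_assoc] at hbe
    exact hb ⟨u, r, (append_inj' hbe rfl).1⟩

lemma proj_relabel (w : PreNode S) : proj (relabel p k f w) = proj w := by
  by_cases hw : ∃ u r, w = p ++ (k, some u) :: r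
  · obtain ⟨u, r, rfl⟩ := hw
    simp [proj]
  · rw [relabel_of_not_exists hw]

lemma relabel_dropLast (w : PreNode S) :
    relabel p k f w.dropLast = (relabel p k f w).dropLast := by
  rcases w.eq_nil_or_concat' with rfl | ⟨b, ⟨k', o⟩, rfl⟩
  · have hnil : relabel p k f [] = [] := relabel_eq_self (by simp)
    rw [dropLast_nil, hnil, dropLast_nil]
  by_cases h : b = p ∧ k' = k
  · obtain ⟨rfl, rfl⟩ := h
    cases o with
    | none => rw [relabel_eq_self (w := b ++ [(k', none)]) (by simp), dropLast_concat, relabel_self]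
    | some u => simp
  · rw [relabel_concat h, dropLast_concat, dropLast_concat]

lemma relabel_mem_NodeSet {w : PreNode S} (hw : w ∈ NodeSet Γ lam S) :
    relabel p k f w ∈ NodeSet Γ lam S := by
  by_cases h : ∃ u r, w = p ++ (k, some u) :: r
  · obtain ⟨u, r, rfl⟩ := h
    rw [relabel_append_cons]
    exact memGamma_univ_of_proj_eq (by simp [proj]) (by simp) hw
  · rwa [relabel_of_not_exists h]

variable (p k) in
noncomputable def relabelPerm (f : Equiv.Perm S) : Equiv.Perm (PreNode S) where
  toFun := relabel p k f
  invFun := relabel p k f.symm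
  left_inv w := by
    by_cases h : ∃ u r, w = p ++ (k, some u) :: r
    · obtain ⟨u, r, rfl⟩ := h
      simp
    · rw [relabel_of_not_exists h, relabel_of_not_exists h]
  right_inv w := by
    by_cases h : ∃ u r, w = p ++ (k, some u) :: r
    · obtain ⟨u, r, rfl⟩ := h
      simp
    · rw [relabel_of_not_exists h, relabel_of_not_exists h]

@[simp] lemma relabelPerm_apply (f : Equiv.Perm S) (w : PreNode S) :
    relabelPerm p k f w = relabel p k f w := rfl

lemma relabelPerm_inv (f : Equiv.Perm S) : (relabelPerm p k f)⁻¹ = relabelPerm p k f⁻¹ := rfl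

lemma isTreeAuto_relabelPerm (f : Equiv.Perm S) : IsTreeAuto Γ lam (relabelPerm p k f) :=
  ⟨fun _ => relabel_mem_NodeSet, fun _ => relabel_mem_NodeSet,
    fun w _ => proj_relabel w, fun w _ => relabel_dropLast w⟩

lemma compat_relabelPerm {H : List ℕ → Set (Equiv.Perm S)} (hHone : ∀ σ, 1 ∈ H σ)
    {f : Equiv.Perm S} (hf : f ∈ H (proj p ++ [k])) : Compat Γ lam H (relabelPerm p k f) := by
  intro b _ k' _ _ _
  by_cases h : b = p ∧ k' = k
  · obtain ⟨rfl, rfl⟩ := h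
    exact ⟨f, hf, fun t _ => by simp⟩
  · exact ⟨1, hHone _, fun t _ => by simpa using relabel_concat h⟩

lemma relabelPerm_mem_AutM {H : List ℕ → Set (Equiv.Perm S)} (hHone : ∀ σ, 1 ∈ H σ)
    (hHinv : ∀ σ, ∀ h ∈ H σ, h⁻¹ ∈ H σ) {f : Equiv.Perm S} (hf : f ∈ H (proj p ++ [k])) :
    relabelPerm p k f ∈ AutM Γ lam H :=
  ⟨isTreeAuto_relabelPerm f, compat_relabelPerm hHone hf,
    relabelPerm_inv f ▸ compat_relabelPerm hHone (hHinv _ f hf)⟩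

end Relabel

/-- For `G = Aut(M)` with `M` ℵ₀-categorical, the set of realizations of `tp(x/C)`. -/
def fixingOrbit {α : Type*} (G : Set (Equiv.Perm α)) (C : Set α) (x : α) : Set α :=
  {y | ∃ g ∈ G, (∀ c ∈ C, g c = c) ∧ g x = y}

lemma fixingOrbit_subset_singleton {α : Type*} {G : Set (Equiv.Perm α)} {C : Set α} {x : α}
    (h : ∀ g ∈ G, (∀ c ∈ C, g c = c) → g x = x) : fixingOrbit G C x ⊆ {x} := by
  rintro _ ⟨g, hg, hgC, rfl⟩
  exact h g hg hgC

lemma exists_append_cons_of_not_mem_tclSet (hclosed : ∀ l ∈ Γ, l.dropLast ∈ Γ)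
    {C : Set (PreNode S)} {x : PreNode S} (hx : x ∈ NodeSet Γ lam S)
    (hxC : x ∉ tclSet Γ lam Set.univ C) :
    ∃ p k s r, x = p ++ (k, some s) :: r ∧ proj p ++ [k] ∈ Γ ∧
      lam (proj p ++ [k]) = true ∧ p ++ [(k, some s)] ∉ tclSet Γ lam Set.univ C := by
  obtain ⟨p, ⟨k, o⟩, r, rfl, hp, hpe⟩ :=
    exists_append_cons_of_nil_mem_of_not_mem (nil_mem_tclSet C) hxC
  have hpeN : p ++ [(k, o)] ∈ NodeSet Γ lam S := prefix_mem_NodeSet hclosed hx (by simp)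
  have hlam : lam (proj p ++ [k]) = true := by
    by_contra hlam
    exact hpe (mem_tclSet_of_lam_eq_false hpeN (by simpa using hlam) (by simpa using hp))
  obtain ⟨s, rfl⟩ := Option.isSome_iff_exists.1 ((memGamma_concat_isSome hpeN).trans hlam)
  exact ⟨p, k, s, r, rfl, by simpa using (memGamma_univ_iff.1 hpeN).1, hlam, hpe⟩

lemma fixingOrbit_infinite_of_not_mem_tclSet (hclosed : ∀ l ∈ Γ, l.dropLast ∈ Γ)
    {H : List ℕ → Set (Equiv.Perm S)} (hHone : ∀ σ, 1 ∈ H σ)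
    (hHinv : ∀ σ, ∀ h ∈ H σ, h⁻¹ ∈ H σ)
    (hHtriv : ∀ σ ∈ Γ, lam σ = true → ∀ B : Finset S, ∀ s : S, s ∉ B →
      {t : S | ∃ hh ∈ H σ, (∀ x ∈ B, hh x = x) ∧ hh s = t}.Infinite)
    {C : Set (PreNode S)} (hC : C.Finite) {x : PreNode S} (hx : x ∈ NodeSet Γ lam S)
    (hxC : x ∉ tclSet Γ lam Set.univ C) : (fixingOrbit (AutM Γ lam H) C x).Infinite := by
  obtain ⟨p, k, s, r, rfl, hσ, hlam, hps⟩ := exists_append_cons_of_not_mem_tclSet hclosed hx hxC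
  -- the labels of the children of `p` along `k` that lie below `C`
  set B : Set S := (fun u => p ++ [(k, some u)]) ⁻¹' {a | ∃ c ∈ C, a <+: c}
  have hB : B.Finite :=
    (finite_setOf_exists_prefix hC).preimage (append_cons_some_injective p k []).injOn
  have hsB : s ∉ hB.toFinset := by
    rintro hs
    obtain ⟨c, hc, hsc⟩ := hB.mem_toFinset.1 hs
    exact hps (mem_tclSet_of_prefix hc hsc)
  refine (((hHtriv _ hσ hlam _ s hsB).image (append_cons_some_injective p k r).injOn).mono ?_)
  rintro _ ⟨_, ⟨f, hf, hfB, rfl⟩, rfl⟩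
  refine ⟨relabelPerm p k f, relabelPerm_mem_AutM hHone hHinv hf, fun c hc => ?_, by simp⟩
  refine relabel_eq_self fun u r' hc' => hfB u (hB.mem_toFinset.2 ⟨c, hc, ?_⟩)
  simp [hc']

end TreePlanDef

theorem construction_acl_eq_tcl_general
    {S : Type*}
    (Γ : Finset (List ℕ)) (lam : List ℕ → Bool)
    (hroot : ([] : List ℕ) ∈ Γ) (hclosed : ∀ l ∈ Γ, l.dropLast ∈ Γ)
    -- the component automorphism groups `H σ = Aut(N_σ)` (transported to `S` via `f_σ`)
    (H : List ℕ → Set (Equiv.Perm S))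
    (hHone : ∀ σ, (1 : Equiv.Perm S) ∈ H σ)
    (hHinv : ∀ σ, ∀ h₁ ∈ H σ, h₁⁻¹ ∈ H σ)
    -- `T_σ` is algebraically trivial
    (hHtriv : ∀ σ ∈ Γ, lam σ = true → ∀ B : Finset S, ∀ s : S, s ∉ B →
      {t : S | ∃ hh ∈ H σ, (∀ x ∈ B, hh x = x) ∧ hh s = t}.Infinite)
     :
    ∀ C : Set (PreNode S), C.Finite → C ⊆ NodeSet Γ lam S →
      {x ∈ NodeSet Γ lam S |
        {y : PreNode S | ∃ g ∈ AutM Γ lam H, (∀ c ∈ C, g c = c) ∧ g x = y}.Finite} =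
      tclSet Γ lam (Set.univ : Set S) C := by
  intro C hCfin hC
  ext x
  change x ∈ NodeSet Γ lam S ∧ (fixingOrbit (AutM Γ lam H) C x).Finite ↔ _
  constructor
  · rintro ⟨hx, hfin⟩
    by_contra hxC
    exact fixingOrbit_infinite_of_not_mem_tclSet hclosed hHone hHinv hHtriv hCfin hx hxC hfin
  · intro hxC
    refine ⟨tclSet_subset_NodeSet hroot hclosed hC hxC, (Set.finite_singleton x).subset ?_⟩
    exact fixingOrbit_subset_singleton fun g hg hgC =>
      hg.1.apply_eq_self_of_mem_tclSet hroot hclosed hC hgC hxC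

/-- in the NIC structure `M` constructed from the tree plan `Γ` with
components modeling ℵ₀-categorical, algebraically trivial theories `T_σ` with one 1-type
(represented via their automorphism groups `H σ` on `S`, so that `Aut(M) = AutM`),
algebraic closure equals tree-closure: for every finite `C ⊆ Γ(S)`, `acl^M(C) = tcl(C)`.
Here, as `M` is ℵ₀-categorical, `x ∈ acl^M(C)` iff the orbit of `x` under `Aut(M/C)` is
finite. -/
theorem construction_acl_eq_tcl
    {S : Type*} [Countable S] [Infinite S]
    (Γ : Finset (List ℕ)) (lam : List ℕ → Bool)
    (hroot : ([] : List ℕ) ∈ Γ) (hclosed : ∀ l ∈ Γ, l.dropLast ∈ Γ)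
    (hlamroot : lam [] = false)
    -- the component automorphism groups `H σ = Aut(N_σ)` (transported to `S` via `f_σ`)
    (H : List ℕ → Set (Equiv.Perm S))
    (hHone : ∀ σ, (1 : Equiv.Perm S) ∈ H σ)
    (hHmul : ∀ σ, ∀ h₁ ∈ H σ, ∀ h₂ ∈ H σ, h₁ * h₂ ∈ H σ)
    (hHinv : ∀ σ, ∀ h₁ ∈ H σ, h₁⁻¹ ∈ H σ)
    -- `T_σ` is ℵ₀-categorical: `H σ` is oligomorphic
    (hHcat : ∀ σ ∈ Γ, lam σ = true → ∀ n : ℕ,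
      {O : Set (Fin n → S) | ∃ s : Fin n → S,
        O = {t | ∃ hh ∈ H σ, ∀ i, hh (s i) = t i}}.Finite)
    -- `|S₁(T_σ)| = 1`: `H σ` is transitive
    (hHtrans : ∀ σ ∈ Γ, lam σ = true → ∀ s t : S, ∃ hh ∈ H σ, hh s = t)
    -- `T_σ` is algebraically trivial
    (hHtriv : ∀ σ ∈ Γ, lam σ = true → ∀ B : Finset S, ∀ s : S, s ∉ B →
      {t : S | ∃ hh ∈ H σ, (∀ x ∈ B, hh x = x) ∧ hh s = t}.Infinite)
     :
    ∀ C : Set (PreNode S), C.Finite → C ⊆ NodeSet Γ lam S →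
      {x ∈ NodeSet Γ lam S |
        {y : PreNode S | ∃ g ∈ AutM Γ lam H, (∀ c ∈ C, g c = c) ∧ g x = y}.Finite} =
      tclSet Γ lam (Set.univ : Set S) C :=
  construction_acl_eq_tcl_general Γ lam hroot hclosed H hHone hHinv hHtriv
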